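/- Let κ ∈ {+,−} and 0 < ε < S. Then the connected component T_ε^κ of (0,λ₀) in C_{λ₀}^κ(F) ∩ 𝔛̄_{λ₀}(ε) ∩ closure(𝔠_y^{−κ}) is contained in C_{λ₀,ε}^{−κ}, and hence T_ε^κ ⊆ C_{λ₀}^{−κ}(F). -/
import Mathlib


open Set Topology

/-- A map `G` is compact on `B` if it is continuous on `B` and maps bounded closed
subsets of the ambient space contained in `B` to relatively compact sets. -/
def IsCompactMapOn {E F : Type*} [NormedAddCommGroup E] [NormedSpace ℝ E]
    [NormedAddCommGroup F] [NormedSpace ℝ F] (G : E → F) (B : Set E) : Prop :=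
  ContinuousOn G B ∧
    ∀ A : Set E, A ⊆ B → Bornology.IsBounded A → IsClosed A → IsCompact (closure (G '' A))

variable {X : Type*} [NormedAddCommGroup X] [NormedSpace ℝ X]

/-- The nonlinear map `F(x, λ) = x - λ K x - H (x, λ)`. -/
noncomputable def Fmap (K : X →L[ℝ] X) (H : X × ℝ → X) : X × ℝ → X :=
  fun p => p.1 - p.2 • K p.1 - H p

open Classical in
/-- The map `h(x, λ) = ‖x‖⁻¹ H(x,λ)` for `x ≠ 0`, `0` otherwise. -/
noncomputable def hmap (H : X × ℝ → X) : X × ℝ → X :=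
  fun p => if p.1 = 0 then 0 else ‖p.1‖⁻¹ • H p

/-- `μ` is a characteristic value of `K` if `μ⁻¹` is an eigenvalue of `K`. -/
def CharVal (K : X →L[ℝ] X) (μ : ℝ) : Prop :=
  Module.End.HasEigenvalue (K : X →ₗ[ℝ] X) μ⁻¹

/-- The multiplicity of a characteristic value `μ`: the dimension of the generalized
eigenspace `⋃_k ker((μ⁻¹ • I - K)^k)` of `K` for the eigenvalue `μ⁻¹`. -/
noncomputable def charMult (K : X →L[ℝ] X) (μ : ℝ) : ℕ :=
  Module.finrank ℝ (Module.End.maxGenEigenspace (K : X →ₗ[ℝ] X) μ⁻¹)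

/-- `𝔖(F)`: the closure in `Ω` of the set of non-trivial solutions of `F(x,λ) = 0`. -/
def SolClosure (F : X × ℝ → X) (Ω : Set (X × ℝ)) : Set (X × ℝ) :=
  closure {p | p ∈ Ω ∧ F p = 0 ∧ p.1 ≠ 0} ∩ Ω

/-- `C_{λ₀}(F)`: the connected component of `(0, λ₀)` in `𝔖(F) ∪ {(0, λ₀)}`. -/
noncomputable def Ccomp (F : X × ℝ → X) (Ω : Set (X × ℝ)) (lam0 : ℝ) : Set (X × ℝ) :=
  connectedComponentIn (SolClosure F Ω ∪ {((0 : X), lam0)}) ((0 : X), lam0)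

/-- `𝔛_{λ₀}(r) = {(x, μ) : ‖x‖ + |λ₀ - μ| < r}`. -/
def ball0 (X : Type*) [NormedAddCommGroup X] (lam0 r : ℝ) : Set (X × ℝ) :=
  {p | ‖p.1‖ + |lam0 - p.2| < r}

/-- The cone `𝔠_y⁺` (for `σ = 1`) resp. `𝔠_y⁻` (for `σ = -1`):
`{(x, λ) : σ l(x) > y ‖x‖}`. -/
def cone (l : X →L[ℝ] ℝ) (σ y : ℝ) : Set (X × ℝ) :=
  {p | y * ‖p.1‖ < σ * l p.1}

/-- The cone `𝔠_y = {(x, λ) : |l(x)| > y ‖x‖}`. -/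
def coneAbs (l : X →L[ℝ] ℝ) (y : ℝ) : Set (X × ℝ) :=
  {p | y * ‖p.1‖ < |l p.1|}

/-- A branch of solutions of `F(x,λ) = 0` at `(0, λ₀)` in the direction of `σ v`
(where `σ = ±1`): a connected subset `Q` of `C_{λ₀}(F)` containing `(0, λ₀)` such that
for every `y ∈ (0,1)` there is `ε_y > 0` with
`∅ ≠ Q ∩ ∂𝔛_{λ₀}(ε) ⊆ 𝔠_y^σ` for all `0 < ε < ε_y`. -/
def IsBranch (F : X × ℝ → X) (Ω : Set (X × ℝ)) (lam0 : ℝ) (l : X →L[ℝ] ℝ) (σ : ℝ)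
    (Q : Set (X × ℝ)) : Prop :=
  Q ⊆ Ccomp F Ω lam0 ∧ IsPreconnected Q ∧ ((0 : X), lam0) ∈ Q ∧
    ∀ y ∈ Ioo (0 : ℝ) 1, ∃ εy > 0, ∀ ε, 0 < ε → ε < εy →
      (Q ∩ frontier (ball0 X lam0 ε)).Nonempty ∧
        Q ∩ frontier (ball0 X lam0 ε) ⊆ cone l σ y

/-- `C_{λ₀}^κ(F)` for `κ = σ = ±1`: the closure in `Ω` of the union of `{(0, λ₀)}` and
all branches of solutions in the direction of `σ v`. -/
noncomputable def Cdir (F : X × ℝ → X) (Ω : Set (X × ℝ)) (lam0 : ℝ) (l : X →L[ℝ] ℝ)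
    (σ : ℝ) : Set (X × ℝ) :=
  closure ({((0 : X), lam0)} ∪ ⋃₀ {Q | IsBranch F Ω lam0 l σ Q}) ∩ Ω

/-- `C_{λ₀,ε}^κ` for `κ = σ = ±1`: the connected component of `(0, λ₀)` in
`C_{λ₀}(F) \ (𝔛_{λ₀}(ε) ∩ 𝔠_y^{-κ})`. -/
noncomputable def Cloc (F : X × ℝ → X) (Ω : Set (X × ℝ)) (lam0 : ℝ) (l : X →L[ℝ] ℝ)
    (y σ ε : ℝ) : Set (X × ℝ) :=
  connectedComponentIn (Ccomp F Ω lam0 \ (ball0 X lam0 ε ∩ cone l (-σ) y)) ((0 : X), lam0)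



section AuxLemmas

variable {X : Type*} [NormedAddCommGroup X] [NormedSpace ℝ X]

private lemma nrm_cont (lam0 : ℝ) :
    Continuous (fun p : X × ℝ => ‖p.1‖ + |lam0 - p.2|) :=
  (continuous_norm.comp continuous_fst).add ((continuous_const.sub continuous_snd).abs)

private lemma ball0_eq (lam0 r : ℝ) :
    ball0 X lam0 r = (fun p : X × ℝ => ‖p.1‖ + |lam0 - p.2|) ⁻¹' Iio r := rfl

private lemma isOpen_ball0 (lam0 r : ℝ) : IsOpen (ball0 X lam0 r) := by
  rw [ball0_eq]; exact (nrm_cont lam0).isOpen_preimage _ isOpen_Iio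

private lemma mem_frontier_ball0 {lam0 δ : ℝ} (hδ : 0 < δ) {q : X × ℝ}
    (hq : ‖q.1‖ + |lam0 - q.2| = δ) : q ∈ frontier (ball0 X lam0 δ) := by
  rw [frontier, Set.mem_diff]
  constructor
  · have hq2 : ((q.1, lam0 + (q.2 - lam0)) : X × ℝ) = q := by
      rw [Prod.ext_iff]; constructor <;> simp
    have hts : Filter.Tendsto (fun t : ℝ => ((t • q.1, lam0 + t • (q.2 - lam0)) : X × ℝ))
        (𝓝[<] (1:ℝ)) (𝓝 q) := by
      apply Filter.Tendsto.mono_left _ nhdsWithin_le_nhds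
      have hcont : Continuous fun t : ℝ => ((t • q.1, lam0 + t • (q.2 - lam0)) : X × ℝ) := by
        fun_prop
      have := hcont.tendsto 1
      simpa [hq2] using this
    refine mem_closure_of_tendsto hts ?_
    filter_upwards [Ioo_mem_nhdsLT_of_mem (show (1:ℝ) ∈ Ioc (0:ℝ) 1 by constructor <;> norm_num)]
      with t ht
    show ‖t • q.1‖ + |lam0 - (lam0 + t • (q.2 - lam0))| < δ
    have h1 : ‖t • q.1‖ + |lam0 - (lam0 + t • (q.2 - lam0))| = t * (‖q.1‖ + |lam0 - q.2|) := by
      rw [norm_smul, Real.norm_eq_abs, abs_of_pos ht.1]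
      have h2 : lam0 - (lam0 + t • (q.2 - lam0)) = t * (lam0 - q.2) := by
        simp [smul_eq_mul]; ring
      rw [h2, abs_mul, abs_of_pos ht.1]; ring
    rw [h1, hq]
    exact mul_lt_of_lt_one_left hδ ht.2
  · rw [(isOpen_ball0 lam0 δ).interior_eq]
    simp [ball0, hq]

private lemma frontier_ball0_subset (lam0 δ : ℝ) :
    frontier (ball0 X lam0 δ) ⊆ {p : X × ℝ | ‖p.1‖ + |lam0 - p.2| = δ} := by
  intro p hp
  rw [ball0_eq] at hp
  have := (nrm_cont (X := X) lam0).frontier_preimage_subset (Iio δ) hp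
  rwa [frontier_Iio] at this

private lemma key_cone [CompleteSpace X]
    (lam0 : ℝ) (Ω : Set (X × ℝ)) (hΩ : Ω ∈ 𝓝 ((0 : X), lam0))
    (K : X →L[ℝ] X) (hK : IsCompactOperator K)
    (H : X × ℝ → X) (hh : ContinuousOn (hmap H) Ω)
    (hsimple : charMult K lam0 = 1)
    (v : X) (hv : ‖v‖ = 1) (hKv : K v = lam0⁻¹ • v)
    (l : X →L[ℝ] ℝ) (hlv : l v = 1)
    (y' : ℝ) (hy' : y' < 1) :
    ∃ δ > 0, ∀ p : X × ℝ, p ∈ Ω → Fmap K H p = 0 → p.1 ≠ 0 →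
      ‖p.1‖ + |lam0 - p.2| < δ → y' * ‖p.1‖ < |l p.1| := by
  by_contra hcon
  push_neg at hcon
  have hex : ∀ n : ℕ, ∃ p : X × ℝ, p ∈ Ω ∧ Fmap K H p = 0 ∧ p.1 ≠ 0 ∧
      (‖p.1‖ + |lam0 - p.2| < 1/((n:ℝ)+1) ∧ |l p.1| ≤ y' * ‖p.1‖) := by
    intro n
    obtain ⟨p, h1, h2, h3, h4, h5⟩ := hcon (1/((n:ℝ)+1)) (by positivity)
    exact ⟨p, h1, h2, h3, h4, h5⟩
  choose p hpΩ hpF hpx hpn using hex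
  have hpl : ∀ n, |l (p n).1| ≤ y' * ‖(p n).1‖ := fun n => (hpn n).2
  have htd : Filter.Tendsto p Filter.atTop (𝓝 ((0:X), lam0)) := by
    rw [tendsto_iff_dist_tendsto_zero]
    refine squeeze_zero (fun n => dist_nonneg) (fun n => ?_)
      tendsto_one_div_add_atTop_nhds_zero_nat
    rw [Prod.dist_eq]
    apply max_le
    · rw [dist_eq_norm, sub_zero]
      have := (hpn n).1
      have h0 := abs_nonneg (lam0 - (p n).2)
      linarith
    · rw [Real.dist_eq, abs_sub_comm]
      have := (hpn n).1
      have h0 := norm_nonneg (p n).1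
      linarith
  set u : ℕ → X := fun n => ‖(p n).1‖⁻¹ • (p n).1 with hu
  have hnu : ∀ n, ‖u n‖ = 1 := by
    intro n
    rw [hu]
    simp only [norm_smul, norm_inv, norm_norm]
    exact inv_mul_cancel₀ (norm_ne_zero_iff.mpr (hpx n))
  have heq : ∀ n, u n = (p n).2 • K (u n) + hmap H (p n) := by
    intro n
    have h0 : (p n).1 = (p n).2 • K (p n).1 + H (p n) := by
      have h1 := hpF n
      rw [Fmap, sub_sub, sub_eq_zero] at h1
      exact h1
    rw [hmap]
    rw [if_neg (hpx n)]
    show ‖(p n).1‖⁻¹ • (p n).1 = (p n).2 • K (‖(p n).1‖⁻¹ • (p n).1) + ‖(p n).1‖⁻¹ • H (p n)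
    rw [map_smul, smul_comm ((p n).2) (‖(p n).1‖⁻¹), ← smul_add, ← h0]
  have hC : IsCompact (closure (⇑K '' Metric.closedBall 0 1)) := by
    have := hK.isCompact_closure_image_closedBall (𝕜₁ := ℝ) (M₁ := X) (M₂ := X)
      (f := (K : X →ₗ[ℝ] X)) 1
    simpa using this
  have hmemC : ∀ n, K (u n) ∈ closure (⇑K '' Metric.closedBall 0 1) := by
    intro n
    exact subset_closure ⟨u n, by simp [mem_closedBall_zero_iff, hnu n], rfl⟩
  obtain ⟨z, -, φ, hφ, hz⟩ := hC.tendsto_subseq hmemC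
  have hht : Filter.Tendsto (fun n => hmap H (p n)) Filter.atTop (𝓝 0) := by
    have hb : ((0:X), lam0) ∈ Ω := mem_of_mem_nhds hΩ
    have h0 : hmap H ((0:X), lam0) = 0 := by simp [hmap]
    have h1 := hh _ hb
    rw [ContinuousWithinAt, h0] at h1
    exact h1.comp (tendsto_nhdsWithin_iff.mpr ⟨htd, Filter.Eventually.of_forall hpΩ⟩)
  have hul : Filter.Tendsto (u ∘ φ) Filter.atTop (𝓝 (lam0 • z)) := by
    have h1 : (u ∘ φ) = fun k => (p (φ k)).2 • K (u (φ k)) + hmap H (p (φ k)) :=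
      funext fun k => heq (φ k)
    rw [h1]
    have h2 : Filter.Tendsto (fun k => (p (φ k)).2) Filter.atTop (𝓝 lam0) :=
      ((continuous_snd.tendsto _).comp htd).comp hφ.tendsto_atTop
    have h3 : Filter.Tendsto (fun k => hmap H (p (φ k))) Filter.atTop (𝓝 0) :=
      hht.comp hφ.tendsto_atTop
    have := (h2.smul hz).add h3
    simpa using this
  have hnz : ‖lam0 • z‖ = 1 := by
    have h1 : Filter.Tendsto (fun k => ‖(u ∘ φ) k‖) Filter.atTop (𝓝 ‖lam0 • z‖) :=
      (continuous_norm.tendsto _).comp hul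
    have h2 : (fun k => ‖(u ∘ φ) k‖) = fun _ => (1:ℝ) := funext fun k => hnu _
    rw [h2] at h1
    exact tendsto_nhds_unique h1 tendsto_const_nhds
  have hKz : K (lam0 • z) = z := by
    have h1 : Filter.Tendsto (fun k => K ((u ∘ φ) k)) Filter.atTop (𝓝 (K (lam0 • z))) :=
      (K.continuous.tendsto _).comp hul
    exact tendsto_nhds_unique h1 hz
  have hlam0 : lam0 ≠ 0 := by
    intro h
    rw [h, zero_smul, norm_zero] at hnz
    norm_num at hnz
  set w : X := lam0 • z with hw
  have hKw : K w = lam0⁻¹ • w := by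
    rw [hw, smul_smul, inv_mul_cancel₀ hlam0, one_smul]
    exact hKz
  have hv0 : v ≠ 0 := by
    intro h
    rw [h, norm_zero] at hv
    norm_num at hv
  have hsimple' : Module.finrank ℝ
      (Module.End.maxGenEigenspace (K : X →ₗ[ℝ] X) lam0⁻¹) = 1 := hsimple
  have hfin : FiniteDimensional ℝ (Module.End.maxGenEigenspace (K : X →ₗ[ℝ] X) lam0⁻¹) :=
    Module.finite_of_finrank_eq_succ hsimple'
  have hEM : Module.End.eigenspace (K : X →ₗ[ℝ] X) lam0⁻¹ ≤
      Module.End.maxGenEigenspace (K : X →ₗ[ℝ] X) lam0⁻¹ :=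
    (Module.End.genEigenspace (K : X →ₗ[ℝ] X) lam0⁻¹).monotone le_top
  have hvE : v ∈ Module.End.eigenspace (K : X →ₗ[ℝ] X) lam0⁻¹ :=
    Module.End.mem_eigenspace_iff.mpr (by simpa using hKv)
  have hwE : w ∈ Module.End.eigenspace (K : X →ₗ[ℝ] X) lam0⁻¹ :=
    Module.End.mem_eigenspace_iff.mpr (by simpa using hKw)
  have hsv : (ℝ ∙ v) = Module.End.maxGenEigenspace (K : X →ₗ[ℝ] X) lam0⁻¹ := by
    apply Submodule.eq_of_le_of_finrank_le
    · exact le_trans ((Submodule.span_singleton_le_iff_mem _ _).mpr hvE) hEM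
    · rw [finrank_span_singleton hv0]
      exact le_of_eq hsimple'
  obtain ⟨c, hc⟩ := Submodule.mem_span_singleton.mp (hsv ▸ (hEM hwE))
  have hcabs : |c| = 1 := by
    have h1 : ‖w‖ = |c| := by
      rw [← hc, norm_smul, Real.norm_eq_abs, hv, mul_one]
    rw [← h1]
    exact hnz
  have hlw : |l w| = 1 := by
    rw [← hc, map_smul, smul_eq_mul, hlv, mul_one]
    exact hcabs
  have hlim : Filter.Tendsto (fun k => |l ((u ∘ φ) k)|) Filter.atTop (𝓝 |l w|) :=
    (continuous_abs.tendsto _).comp ((l.continuous.tendsto _).comp hul)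
  have hle : ∀ k, |l ((u ∘ φ) k)| ≤ y' := by
    intro k
    have hx' : ‖(p (φ k)).1‖ ≠ 0 := norm_ne_zero_iff.mpr (hpx (φ k))
    show |l (‖(p (φ k)).1‖⁻¹ • (p (φ k)).1)| ≤ y'
    rw [map_smul, smul_eq_mul, abs_mul, abs_inv, abs_norm]
    calc ‖(p (φ k)).1‖⁻¹ * |l (p (φ k)).1|
        ≤ ‖(p (φ k)).1‖⁻¹ * (y' * ‖(p (φ k)).1‖) := by
          apply mul_le_mul_of_nonneg_left (hpl (φ k)) (by positivity)
      _ = y' := by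
          rw [mul_comm y', ← mul_assoc, inv_mul_cancel₀ hx', one_mul]
  have hfinal : |l w| ≤ y' := le_of_tendsto hlim (Filter.Eventually.of_forall hle)
  rw [hlw] at hfinal
  linarith

end AuxLemmas

/-- For `κ ∈ {+,−}` and `0 < ε < S`, the connected component
`T_ε^κ` of `(0,λ₀)` in `C_{λ₀}^κ(F) ∩ 𝔛̄_{λ₀}(ε) ∩ closure(𝔠_y^{−κ})` is contained
in `C_{λ₀,ε}^{−κ}`, hence in `C_{λ₀}^{−κ}(F)`. -/
theorem T_subset_opposite
    {X : Type*} [NormedAddCommGroup X] [NormedSpace ℝ X] [CompleteSpace X]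
    (lam0 : ℝ) (Ω : Set (X × ℝ)) (hΩ : Ω ∈ 𝓝 ((0 : X), lam0))
    (K : X →L[ℝ] X) (hK : IsCompactOperator K)
    (H : X × ℝ → X) (hH : IsCompactMapOn H Ω) (hh : ContinuousOn (hmap H) Ω)
    (hchar : CharVal K lam0) (hsimple : charMult K lam0 = 1)
    (v : X) (hv : ‖v‖ = 1) (hKv : K v = lam0⁻¹ • v)
    (l : X →L[ℝ] ℝ) (hl : ∀ x : X, l (K x) = lam0⁻¹ * l x) (hlv : l v = 1)
    (y : ℝ) (hy : y ∈ Ioo (0 : ℝ) 1) (S : ℝ) (hS0 : 0 < S)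
    (hSΩ : closure (ball0 X lam0 S) ⊆ interior Ω)
    (hScone : (SolClosure (Fmap K H) Ω ∩ closure (ball0 X lam0 S)) \ {((0 : X), lam0)}
      ⊆ coneAbs l y)
    (σ : ℝ) (hσ : σ = 1 ∨ σ = -1) (ε : ℝ) (hε0 : 0 < ε) (hεS : ε < S) :
    connectedComponentIn
        (Cdir (Fmap K H) Ω lam0 l σ ∩ closure (ball0 X lam0 ε) ∩
          closure (cone l (-σ) y)) ((0 : X), lam0) ⊆
        Cloc (Fmap K H) Ω lam0 l y (-σ) ε ∧
      connectedComponentIn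
        (Cdir (Fmap K H) Ω lam0 l σ ∩ closure (ball0 X lam0 ε) ∩
          closure (cone l (-σ) y)) ((0 : X), lam0) ⊆
        Cdir (Fmap K H) Ω lam0 l (-σ) := by
  obtain ⟨hy0, hy1⟩ := hy
  have hσ1 : |σ| = 1 := by rcases hσ with h|h <;> simp [h]
  have hσσ : σ * σ = 1 := by rcases hσ with h|h <;> rw [h] <;> norm_num
  have hbaseΩ : ((0:X), lam0) ∈ Ω := mem_of_mem_nhds hΩ
  -- the base point is in the closure of the opposite cone
  have hbcc : ((0:X), lam0) ∈ closure (cone l (-σ) y) := by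
    have hts : Filter.Tendsto (fun t : ℝ => ((t • ((-σ) • v), lam0) : X × ℝ))
        (𝓝[>] (0:ℝ)) (𝓝 ((0:X), lam0)) := by
      apply Filter.Tendsto.mono_left _ nhdsWithin_le_nhds
      have hcont : Continuous fun t : ℝ => ((t • ((-σ) • v), lam0) : X × ℝ) := by fun_prop
      have := hcont.tendsto 0
      simpa using this
    refine mem_closure_of_tendsto hts ?_
    filter_upwards [self_mem_nhdsWithin] with t ht
    have ht0 : (0:ℝ) < t := ht
    show y * ‖t • ((-σ) • v)‖ < (-σ) * l (t • ((-σ) • v))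
    rw [map_smul, map_smul, smul_eq_mul, smul_eq_mul, hlv, norm_smul, norm_smul, hv,
      Real.norm_eq_abs, Real.norm_eq_abs, abs_neg, hσ1, abs_of_pos ht0]
    have h1 : -σ * (t * (-σ * 1)) = t * (σ * σ) := by ring
    rw [h1, hσσ]
    nlinarith
  -- the base point is in the big set
  have hbs : ((0:X), lam0) ∈ (Cdir (Fmap K H) Ω lam0 l σ ∩ closure (ball0 X lam0 ε) ∩
      closure (cone l (-σ) y)) := by
    refine ⟨⟨⟨subset_closure (Or.inl rfl), hbaseΩ⟩, subset_closure ?_⟩, hbcc⟩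
    show ‖(0:X)‖ + |lam0 - lam0| < ε
    simpa using hε0
  set sT := Cdir (Fmap K H) Ω lam0 l σ ∩ closure (ball0 X lam0 ε) ∩
      closure (cone l (-σ) y) with hsT
  set T := connectedComponentIn sT ((0:X), lam0) with hT
  have hTpre : IsPreconnected T := isPreconnected_connectedComponentIn
  have hbT : ((0:X), lam0) ∈ T := mem_connectedComponentIn hbs
  have hTs : T ⊆ sT := connectedComponentIn_subset _ _
  have hCc_sub : Ccomp (Fmap K H) Ω lam0 ⊆ SolClosure (Fmap K H) Ω ∪ {((0:X), lam0)} :=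
    connectedComponentIn_subset _ _
  have hbCc : ((0:X), lam0) ∈ Ccomp (Fmap K H) Ω lam0 :=
    mem_connectedComponentIn (Or.inr rfl)
  -- Cdir is contained in SolClosure ∪ {base}
  have hCdir_sub : ∀ τ : ℝ, Cdir (Fmap K H) Ω lam0 l τ ⊆
      SolClosure (Fmap K H) Ω ∪ {((0:X), lam0)} := by
    intro τ q hq
    have h1 : closure ({((0:X), lam0)} ∪ ⋃₀ {Q | IsBranch (Fmap K H) Ω lam0 l τ Q}) ⊆
        closure {p : X × ℝ | p ∈ Ω ∧ Fmap K H p = 0 ∧ p.1 ≠ 0} ∪ {((0:X), lam0)} := by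
      refine closure_minimal ?_ (isClosed_closure.union isClosed_singleton)
      refine union_subset (fun x hx => Or.inr hx) ?_
      refine (sUnion_subset fun Q hQ => hQ.1).trans ?_
      refine (connectedComponentIn_subset _ _).trans ?_
      rintro q' (⟨h, -⟩|h)
      · exact Or.inl h
      · exact Or.inr h
    rcases h1 hq.1 with h|h
    · exact Or.inl ⟨h, hq.2⟩
    · exact Or.inr h
  -- Cdir σ is contained in Ccomp
  have hCdir_Ccomp : Cdir (Fmap K H) Ω lam0 l σ ⊆ Ccomp (Fmap K H) Ω lam0 := by
    have hCW : Ccomp (Fmap K H) Ω lam0 ⊆ closure (Ccomp (Fmap K H) Ω lam0) ∩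
        (SolClosure (Fmap K H) Ω ∪ {((0:X), lam0)}) :=
      subset_inter subset_closure hCc_sub
    have hWpre : IsPreconnected (closure (Ccomp (Fmap K H) Ω lam0) ∩
        (SolClosure (Fmap K H) Ω ∪ {((0:X), lam0)})) :=
      isPreconnected_connectedComponentIn.subset_closure hCW inter_subset_left
    have hWsub : closure (Ccomp (Fmap K H) Ω lam0) ∩
        (SolClosure (Fmap K H) Ω ∪ {((0:X), lam0)}) ⊆ Ccomp (Fmap K H) Ω lam0 :=
      hWpre.subset_connectedComponentIn ⟨subset_closure hbCc, Or.inr rfl⟩ inter_subset_right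
    intro q hq
    apply hWsub
    constructor
    · have h2 : ({((0:X), lam0)} ∪ ⋃₀ {Q | IsBranch (Fmap K H) Ω lam0 l σ Q}) ⊆
          Ccomp (Fmap K H) Ω lam0 := by
        refine union_subset ?_ (sUnion_subset fun Q hQ => hQ.1)
        intro x hx
        rw [mem_singleton_iff] at hx
        rw [hx]
        exact hbCc
      exact closure_mono h2 hq.1
    · exact hCdir_sub σ hq
  have hTCc : T ⊆ Ccomp (Fmap K H) Ω lam0 := fun q hq => hCdir_Ccomp (hTs hq).1.1
  -- the closed cone bound
  have hD : closure (cone l (-σ) y) ⊆ {p : X × ℝ | y * ‖p.1‖ ≤ -σ * l p.1} := by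
    refine closure_minimal (fun p hp => show y * ‖p.1‖ ≤ -σ * l p.1 from le_of_lt hp) ?_
    have hc1 : Continuous fun p : X × ℝ => y * ‖p.1‖ := by fun_prop
    have hc2 : Continuous fun p : X × ℝ => -σ * l p.1 := by fun_prop
    exact isClosed_le hc1 hc2
  -- Part 1
  have part1 : T ⊆ Cloc (Fmap K H) Ω lam0 l y (-σ) ε := by
    rw [Cloc, neg_neg]
    apply hTpre.subset_connectedComponentIn hbT
    intro q hq
    refine ⟨hTCc hq, ?_⟩
    rintro ⟨-, hq2⟩
    have h3 : y * ‖q.1‖ ≤ -σ * l q.1 := hD (hTs hq).2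
    have h4 : y * ‖q.1‖ < σ * l q.1 := hq2
    have h5 : -σ * l q.1 = -(σ * l q.1) := by ring
    rw [h5] at h3
    have h6 : 0 ≤ y * ‖q.1‖ := mul_nonneg hy0.le (norm_nonneg _)
    linarith
  refine ⟨part1, ?_⟩
  -- Part 2
  have hTΩ : T ⊆ Ω := fun q hq => (hTs hq).1.1.2
  by_cases hTb : ∀ q ∈ T, q = ((0:X), lam0)
  · intro q hq
    rw [hTb q hq]
    exact ⟨subset_closure (Or.inl rfl), hbaseΩ⟩
  · push_neg at hTb
    obtain ⟨p0, hp0T, hp0b⟩ := hTb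
    have hr0 : 0 < ‖p0.1‖ + |lam0 - p0.2| := by
      rcases lt_or_eq_of_le (by positivity : (0:ℝ) ≤ ‖p0.1‖ + |lam0 - p0.2|) with h|h
      · exact h
      · exfalso
        apply hp0b
        have hn := norm_nonneg p0.1
        have ha := abs_nonneg (lam0 - p0.2)
        have h1 : ‖p0.1‖ = 0 := by linarith
        have h2 : |lam0 - p0.2| = 0 := by linarith
        have h3 := norm_eq_zero.mp h1
        have h4 := abs_eq_zero.mp h2
        rw [Prod.ext_iff]
        exact ⟨h3, by linarith⟩
    set r := ‖p0.1‖ + |lam0 - p0.2| with hr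
    have hbranch : IsBranch (Fmap K H) Ω lam0 l (-σ) T := by
      refine ⟨hTCc, hTpre, hbT, ?_⟩
      intro y' hy'
      obtain ⟨δ₀, hδ₀, hkey⟩ := key_cone lam0 Ω hΩ K hK H hh hsimple v hv hKv l hlv
        ((1 + y') / 2) (by linarith [hy'.2])
      refine ⟨min δ₀ (min S r), by positivity, ?_⟩
      intro δ hδ0 hδlt
      have hδδ0 : δ < δ₀ := lt_of_lt_of_le hδlt (min_le_left _ _)
      have hδS : δ < S := lt_of_lt_of_le hδlt ((min_le_right _ _).trans (min_le_left _ _))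
      have hδr : δ < r := lt_of_lt_of_le hδlt ((min_le_right _ _).trans (min_le_right _ _))
      constructor
      · -- nonemptiness via the intermediate value theorem
        have hIcc := hTpre.intermediate_value hbT hp0T
          ((nrm_cont (X := X) lam0).continuousOn (s := T))
        have hmem : δ ∈ Icc (‖((0:X), lam0).1‖ + |lam0 - ((0:X), lam0).2|)
            (‖p0.1‖ + |lam0 - p0.2|) := by
          simp only [norm_zero]
          constructor
          · simpa using hδ0.le
          · rw [← hr]; exact hδr.le
        obtain ⟨q, hqT, hq⟩ := hIcc hmem
        exact ⟨q, hqT, mem_frontier_ball0 hδ0 hq⟩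
      · -- cone containment
        rintro q ⟨hqT, hqf⟩
        have hqδ : ‖q.1‖ + |lam0 - q.2| = δ := frontier_ball0_subset lam0 δ hqf
        have hqb : q ≠ ((0:X), lam0) := by
          intro h
          rw [h] at hqδ
          simp only [norm_zero, sub_self, abs_zero, add_zero, zero_add] at hqδ
          exact absurd hqδ.symm hδ0.ne'
        have hqS : q ∈ SolClosure (Fmap K H) Ω := by
          rcases hCdir_sub σ (hTs hqT).1.1 with h|h
          · exact h
          · exact absurd h hqb
        have hqcA : q ∈ coneAbs l y := by
          apply hScone
          refine ⟨⟨hqS, subset_closure ?_⟩, hqb⟩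
          show ‖q.1‖ + |lam0 - q.2| < S
          rw [hqδ]
          exact hδS
        have hx0 : q.1 ≠ 0 := by
          intro h
          have h1 : y * ‖q.1‖ < |l q.1| := hqcA
          rw [h] at h1
          simp at h1
        have hxpos : 0 < ‖q.1‖ := norm_pos_iff.mpr hx0
        obtain ⟨a, haA, hal⟩ := mem_closure_iff_seq_limit.mp hqS.1
        have h3 : ((1 + y') / 2) * ‖q.1‖ ≤ |l q.1| := by
          have hop : ball0 X lam0 δ₀ ∈ 𝓝 q := (isOpen_ball0 lam0 δ₀).mem_nhds
            (by show ‖q.1‖ + |lam0 - q.2| < δ₀; rw [hqδ]; exact hδδ0)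
          have hev : ∀ᶠ k in Filter.atTop,
              ((1 + y') / 2) * ‖(a k).1‖ ≤ |l (a k).1| := by
            filter_upwards [hal.eventually_mem hop] with k hk
            exact (hkey (a k) (haA k).1 (haA k).2.1 (haA k).2.2 hk).le
          have hta : Filter.Tendsto (fun k => ((1 + y') / 2) * ‖(a k).1‖) Filter.atTop
              (𝓝 (((1 + y') / 2) * ‖q.1‖)) :=
            ((continuous_const.mul (continuous_norm.comp continuous_fst)).tendsto q).comp hal
          have htb : Filter.Tendsto (fun k => |l (a k).1|) Filter.atTop (𝓝 |l q.1|) :=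
            ((continuous_abs.comp (l.continuous.comp continuous_fst)).tendsto q).comp hal
          exact le_of_tendsto_of_tendsto hta htb hev
        have h2 : y' * ‖q.1‖ < ((1 + y') / 2) * ‖q.1‖ := by nlinarith [hy'.2]
        have h5 : y' * ‖q.1‖ < |l q.1| := lt_of_lt_of_le h2 h3
        have h4 : y * ‖q.1‖ ≤ -σ * l q.1 := hD (hTs hqT).2
        have h6 : 0 ≤ -σ * l q.1 := le_trans (mul_nonneg hy0.le (norm_nonneg _)) h4
        have h7 : |l q.1| = -σ * l q.1 := by
          rw [← abs_of_nonneg h6, abs_mul, abs_neg, hσ1, one_mul]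
        show y' * ‖q.1‖ < (-σ) * l q.1
        linarith
    intro q hq
    exact ⟨subset_closure (Or.inr ⟨T, hbranch, hq⟩), hTΩ hq⟩
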